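/- Let G be obtained from a connected graph G_0 by attaching at each vertex v of G_0 a disjoint copy of C_3 (adding two new adjacent vertices both adjacent to v). Then ι(G) = |V(G)|/3, i.e., the isolation number equals one third of the order of G. -/
import Mathlib


open SimpleGraph Set

/-- The closed neighborhood `N[D]` of a set of vertices. -/
def closedNbhd {V : Type*} (G : SimpleGraph V) (D : Set V) : Set V :=
  {w | w ∈ D ∨ ∃ v ∈ D, G.Adj v w}

/-- `D` is an isolating set: the vertices outside `N[D]` form an independent set. -/
def IsIsolating {V : Type*} (G : SimpleGraph V) (D : Set V) : Prop :=
  ∀ a b : V, a ∉ closedNbhd G D → b ∉ closedNbhd G D → ¬ G.Adj a b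

/-- The isolation number: minimum cardinality of an isolating set. -/
noncomputable def isolNum {V : Type*} (G : SimpleGraph V) : ℕ :=
  sInf {k | ∃ D : Set V, IsIsolating G D ∧ D.ncard = k}

/-- The graph obtained from `G₀` by attaching a disjoint triangle at every vertex `v`:
two new vertices `(v,1), (v,2)`, adjacent to each other and to `v = (v,0)`. -/
def attachC3 {V₀ : Type*} (G₀ : SimpleGraph V₀) : SimpleGraph (V₀ × Fin 3) :=
  SimpleGraph.fromRel (fun p q =>
    (p.2 = 0 ∧ q.2 = 0 ∧ G₀.Adj p.1 q.1) ∨ (p.1 = q.1 ∧ p.2 ≠ q.2))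

theorem stmt13 {V₀ : Type*} [Fintype V₀] (G₀ : SimpleGraph V₀) (hconn : G₀.Connected) :
    3 * isolNum (attachC3 G₀) = Fintype.card (V₀ × Fin 3) := by
  classical
  have key : isolNum (attachC3 G₀) = Fintype.card V₀ := by
    set S : Set ℕ := {k | ∃ D : Set (V₀ × Fin 3), IsIsolating (attachC3 G₀) D ∧ D.ncard = k}
    have hinj : Function.Injective (fun v : V₀ => (v, (0 : Fin 3))) :=
      fun a b h => congrArg Prod.fst h
    have hmem : Fintype.card V₀ ∈ S := by
      refine ⟨Set.range (fun v : V₀ => (v, (0 : Fin 3))), ?_, ?_⟩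
      · intro a b ha _ _
        refine absurd (?_ : a ∈ closedNbhd (attachC3 G₀)
          (Set.range fun v : V₀ => (v, (0 : Fin 3)))) ha
        by_cases h2 : a.2 = 0
        · exact Or.inl ⟨a.1, by rw [← h2]⟩
        · refine Or.inr ⟨(a.1, 0), ⟨a.1, rfl⟩, ?_, Or.inl (Or.inr ⟨rfl, ?_⟩)⟩
          · intro he; exact h2 (by rw [← he])
          · exact fun he => h2 he.symm
      · rw [← Nat.card_coe_set_eq, Nat.card_range_of_injective hinj,
          Nat.card_eq_fintype_card]
    have hlb : ∀ k ∈ S, Fintype.card V₀ ≤ k := by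
      rintro k ⟨D, hD, rfl⟩
      have hpick : ∀ v : V₀, ∃ p ∈ D, p.1 = v := by
        intro v
        by_contra hno
        push_neg at hno
        have h12 : (attachC3 G₀).Adj (v, 1) (v, 2) := by
          exact ⟨by simp, Or.inl (Or.inr ⟨rfl, show (1 : Fin 3) ≠ 2 by decide⟩)⟩
        have hnbhd : ∀ i : Fin 3, i ≠ 0 → (v, i) ∉ closedNbhd (attachC3 G₀) D := by
          intro i hi0 hi
          rcases hi with hi | ⟨p, hp, -, h | h⟩
          · exact hno _ hi rfl
          · rcases h with ⟨-, h2, -⟩ | ⟨h1, -⟩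
            · exact hi0 h2
            · exact hno _ hp h1
          · rcases h with ⟨h2, -, -⟩ | ⟨h1, -⟩
            · exact hi0 h2
            · exact hno _ hp h1.symm
        exact hD _ _ (hnbhd 1 (by decide)) (hnbhd 2 (by decide)) h12
      choose f hfD hf1 using hpick
      have hfinj : Function.Injective f := fun a b h => by rw [← hf1 a, ← hf1 b, h]
      have hg : Function.Injective (fun v : V₀ => (⟨f v, hfD v⟩ : D)) :=
        fun a b h => hfinj (congrArg Subtype.val h)
      calc Fintype.card V₀ = Nat.card V₀ := Nat.card_eq_fintype_card.symm
        _ ≤ Nat.card D := Nat.card_le_card_of_injective _ hg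
        _ = D.ncard := Nat.card_coe_set_eq D
    exact le_antisymm (Nat.sInf_le hmem) (le_csInf ⟨_, hmem⟩ hlb)
  rw [key, Fintype.card_prod, Fintype.card_fin, mul_comm]
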